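/- arXiv:1608.01758 — 4 statements merged into one kernel-verified Lean document; each statement's English description precedes it below -/
import Mathlib

section
/- Let A be an n×n complex matrix (n ≥ 2) and let x ⊗ f denote the rank-one matrix x f*. Define Aᵖᵉʳᵖ = {B : A*B = 0}. If A has rank one, then Aᵖᵉʳᵖ is maximal: for any nonzero matrix C with Aᵖᵉʳᵖ ⊆ Cᵖᵉʳᵖ, one has Cᵖᵉʳᵖ = Aᵖᵉʳᵖ. -/
/-!
A matrix `B` lies in `Aᵖᵉʳᵖ` exactly when all its columns lie in `ker A*`, so `Aᵖᵉʳᵖ ⊆ Cᵖᵉʳᵖ`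
amounts to `ker A* ≤ ker C*`. When `A` has rank one, `ker A*` is a hyperplane, and the only
kernel of a nonzero map containing a hyperplane is that hyperplane.
-/

/-- For an `n × n` complex matrix `A`, the set `Aᵖᵉʳᵖ = {B : Aᴴ * B = 0}`. -/
def matPerp {n : ℕ} (A : Matrix (Fin n) (Fin n) ℂ) : Set (Matrix (Fin n) (Fin n) ℂ) :=
  {B | A.conjTranspose * B = 0}

open Matrix Module LinearMap

theorem LinearMap.ker_eq_of_ker_le_of_finrank_range_eq_one {K V W : Type*} [DivisionRing K]
    [AddCommGroup V] [Module K V] [FiniteDimensional K V] [AddCommGroup W] [Module K W]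
    {f g : V →ₗ[K] W} (hle : ker f ≤ ker g) (hf : finrank K (range f) = 1) (hg : g ≠ 0) :
    ker f = ker g := by
  have hf' := finrank_range_add_finrank_ker f
  have hg' := finrank_range_add_finrank_ker g
  have : finrank K (range g) ≠ 0 := fun h => hg (range_eq_bot.1 (Submodule.finrank_eq_zero.1 h))
  exact Submodule.eq_of_le_of_finrank_le hle (by omega)

theorem Matrix.mulVecLin_ne_zero {m n R : Type*} [CommSemiring R] [Fintype n] [DecidableEq n]
    {M : Matrix m n R} (hM : M ≠ 0) : M.mulVecLin ≠ 0 := by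
  rwa [← toLin'_apply', ne_eq, LinearEquiv.map_eq_zero_iff]

theorem mem_matPerp_iff_forall_col_mem_ker {n : ℕ} {A B : Matrix (Fin n) (Fin n) ℂ} :
    B ∈ matPerp A ↔ ∀ j, B.col j ∈ ker Aᴴ.mulVecLin := by
  have hcol (j : Fin n) : Aᴴ *ᵥ B.col j = (Aᴴ * B).col j := rfl
  simp only [mem_ker, mulVecLin_apply, hcol]
  exact ⟨fun h j => by rw [show Aᴴ * B = 0 from h]; rfl, ext_col⟩

theorem matPerp_subset_matPerp_iff {n : ℕ} {A C : Matrix (Fin n) (Fin n) ℂ} :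
    matPerp A ⊆ matPerp C ↔ ker Aᴴ.mulVecLin ≤ ker Cᴴ.mulVecLin := by
  simp only [Set.subset_def, mem_matPerp_iff_forall_col_mem_ker]
  refine ⟨fun h v hv => ?_, fun h B hB j => h (hB j)⟩
  rcases isEmpty_or_nonempty (Fin n) with _ | ⟨⟨j⟩⟩
  · rw [Subsingleton.elim v 0]
    exact zero_mem _
  exact h (of fun i _ => v i) (fun _ => hv) j

theorem stmt_5_general {n : ℕ} (A : Matrix (Fin n) (Fin n) ℂ)
    (hA : A.rank = 1) :
    ∀ C : Matrix (Fin n) (Fin n) ℂ, C ≠ 0 → matPerp A ⊆ matPerp C →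
      matPerp C = matPerp A := by
  intro C hC hsub
  have hrank : finrank ℂ (range Aᴴ.mulVecLin) = 1 := by
    open scoped ComplexOrder in exact (rank_conjTranspose A).trans hA
  have hker := ker_eq_of_ker_le_of_finrank_range_eq_one (matPerp_subset_matPerp_iff.1 hsub)
    hrank (mulVecLin_ne_zero (by simpa using hC))
  exact (matPerp_subset_matPerp_iff.2 hker.ge).antisymm hsub

theorem stmt_5 {n : ℕ} (hn : 2 ≤ n) (A : Matrix (Fin n) (Fin n) ℂ)
    (hA : A.rank = 1) :
    ∀ C : Matrix (Fin n) (Fin n) ℂ, C ≠ 0 → matPerp A ⊆ matPerp C →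
      matPerp C = matPerp A :=
  stmt_5_general A hA
end

section
/- Let A be an n×n complex matrix of rank at least 2. Then the set Aᵖᵉʳᵖ = {B : A*B = 0} is not maximal: there exists a rank-one matrix C with Aᵖᵉʳᵖ ⊆ Cᵖᵉʳᵖ and Cᵖᵉʳᵖ ≠ Aᵖᵉʳᵖ. -/
namespace Matrix

variable {m n K : Type*} [Fintype n] [Field K]

theorem rank_pos_of_ne_zero {A : Matrix m n K} (hA : A ≠ 0) : 0 < A.rank := by
  rw [Nat.pos_iff_ne_zero, rank, Ne, Submodule.finrank_eq_zero, LinearMap.range_eq_bot]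
  classical
  exact fun h => hA (toLin'.injective (by rw [toLin'_apply', h, map_zero]))

theorem rank_eq_rank_of_ker_mulVecLin_eq {A B : Matrix m n K}
    (h : LinearMap.ker A.mulVecLin = LinearMap.ker B.mulVecLin) : A.rank = B.rank := by
  have hA := LinearMap.finrank_range_add_finrank_ker A.mulVecLin
  have hB := LinearMap.finrank_range_add_finrank_ker B.mulVecLin
  rw [h] at hA
  unfold rank
  omega

theorem rank_mul_single_eq_one [DecidableEq n] {A : Matrix m n K} {i : m} {j : n}
    (hij : A i j ≠ 0) : (A * single j j (1 : K)).rank = 1 := by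
  refine le_antisymm ?_ (rank_pos_of_ne_zero fun h => hij ?_)
  · rw [single_eq_single_vecMulVec_single]
    exact (rank_mul_le_right _ _).trans (rank_vecMulVec_le _ _)
  simpa using congrFun (congrFun h i) j

end Matrix

open Matrix
open scoped ComplexOrder

variable {n : ℕ}

theorem replicateCol_mem_matPerp_iff (M : Matrix (Fin n) (Fin n) ℂ) (w : Fin n → ℂ) :
    replicateCol (Fin n) w ∈ matPerp M ↔ Mᴴ *ᵥ w = 0 := by
  rcases isEmpty_or_nonempty (Fin n) with _ | _
  · exact iff_of_true (Subsingleton.elim _ _) (Subsingleton.elim _ _)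
  · rw [matPerp, Set.mem_ofPred_eq, ← replicateCol_mulVec, replicateCol_eq_zero]

theorem matPerp_subset_matPerp_mul (A D : Matrix (Fin n) (Fin n) ℂ) :
    matPerp A ⊆ matPerp (A * D) := fun B hB => by
  simp only [matPerp, Set.mem_ofPred_eq, conjTranspose_mul, Matrix.mul_assoc] at hB ⊢
  rw [hB, Matrix.mul_zero]

theorem rank_eq_rank_of_matPerp_eq {A C : Matrix (Fin n) (Fin n) ℂ} (h : matPerp A = matPerp C) :
    A.rank = C.rank := by
  rw [← rank_conjTranspose A, ← rank_conjTranspose C]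
  refine rank_eq_rank_of_ker_mulVecLin_eq (Submodule.ext fun w => ?_)
  simp only [LinearMap.mem_ker, mulVecLin_apply, ← replicateCol_mem_matPerp_iff, h]

theorem stmt_6 {n : ℕ} (A : Matrix (Fin n) (Fin n) ℂ) (hA : 2 ≤ A.rank) :
    ∃ C : Matrix (Fin n) (Fin n) ℂ, C.rank = 1 ∧ matPerp A ⊆ matPerp C ∧
      matPerp C ≠ matPerp A := by
  obtain ⟨i, j, hij⟩ : ∃ i j, A i j ≠ 0 := by
    by_contra! h
    rw [show A = 0 from Matrix.ext h, rank_zero] at hA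
    omega
  have hC := rank_mul_single_eq_one hij
  refine ⟨A * single j j 1, hC, matPerp_subset_matPerp_mul A _, fun h => ?_⟩
  have := rank_eq_rank_of_matPerp_eq h
  omega
end

section
/- Let A be a bounded operator on a complex Hilbert space, ε > 0, and a ∈ ℂ. Then A = aI if and only if σ_ε(A) = D(a, ε), the open disc of radius ε centered at a. -/
open scoped InnerProductSpace

/-- The ε-pseudo spectrum `σ_ε(A) = {z : ‖(zI - A)⁻¹‖ > ε⁻¹}`, where points `z`
with `zI - A` not invertible are included. -/
noncomputable def pseudoSpectrum {H : Type*} [NormedAddCommGroup H]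
    [InnerProductSpace ℂ H] [CompleteSpace H] (ε : ℝ) (A : H →L[ℂ] H) : Set ℂ :=
  {z | ¬ IsUnit (z • (1 : H →L[ℂ] H) - A) ∨
    ε⁻¹ < ‖Ring.inverse (z • (1 : H →L[ℂ] H) - A)‖}

/-!
If `A = aI` then `‖(zI - A)⁻¹‖ = |z - a|⁻¹`, so `σ_ε(A) = D(a, ε)`.

Conversely, `‖(zI - A)⁻¹‖ ≥ |z - λ|⁻¹` for every `λ ∈ σ(A)`, so `D(λ, ε) ⊆ σ_ε(A) = D(a, ε)`,
which forces `σ(A) = {a}`. With `N = A - aI`, the operator function `f(z) = (I - zN)⁻¹` is then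
entire, with `f(0) = I`, `f'(0) = N`, and `‖f(z)‖ = ε ‖((z⁻¹ + a)I - A)⁻¹‖ ≤ 1` on `|z| = ε⁻¹`
because `z⁻¹ + a ∉ σ_ε(A)`. For each `x`, the holomorphic function `⟪x, f(z) x⟫` thus attains its
maximal modulus `‖x‖²` on the disc `|z| ≤ ε⁻¹` at the centre, so it is constant and its
derivative `⟪x, N x⟫` vanishes. A complex Hilbert space operator with zero numerical range is `0`.
-/

open Metric

theorem eq_of_ball_subset_ball {E : Type*} [NormedAddCommGroup E] [NormedSpace ℝ E]
    {x y : E} {r : ℝ} (hr : 0 < r) (h : ball x r ⊆ ball y r) : x = y := by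
  by_contra hxy
  set d := ‖x - y‖
  have hd : 0 < d := norm_pos_iff.mpr (sub_ne_zero.mpr hxy)
  have hdr : d < r := by simpa [dist_eq_norm] using h (mem_ball_self hr)
  -- moving `x` a distance `r - d / 2` away from `y` stays in `ball x r` but leaves `ball y r`
  set c := (r - d / 2) / d
  have hc : 0 ≤ c := div_nonneg (by linarith) hd.le
  have hcd : c * d = r - d / 2 := div_mul_cancel₀ _ hd.ne'
  have hz : x + c • (x - y) ∈ ball y r := h <| by
    rw [mem_ball, dist_eq_norm, add_sub_cancel_left, norm_smul, Real.norm_of_nonneg hc, hcd]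
    linarith
  have hzy : x + c • (x - y) - y = (1 + c) • (x - y) := by rw [add_smul, one_smul]; abel
  rw [mem_ball, dist_eq_norm, hzy, norm_smul, Real.norm_of_nonneg (by linarith), add_mul,
    one_mul, hcd] at hz
  linarith

namespace spectrum

section Algebra

variable {𝕜 A : Type*} [Field 𝕜] [Ring A] [Algebra 𝕜 A]

theorem resolvent_inv (a : A) {z : 𝕜} (hz : z ≠ 0) :
    resolvent a z⁻¹ = z • Ring.inverse (1 - z • a) := by
  lift z to 𝕜ˣ using hz.isUnit
  simpa [resolvent, Units.smul_def] using
    congr(z • $(units_smul_resolvent_self (r := z⁻¹) (a := a)))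

theorem resolvent_algebraMap (c z : 𝕜) :
    resolvent (algebraMap 𝕜 A c) z = algebraMap 𝕜 A (z - c)⁻¹ := by
  rw [resolvent, ← map_sub]
  rcases eq_or_ne (z - c) 0 with h | h
  · simp [h]
  · simpa using Ring.inverse_unit ((Units.mk0 _ h).map (algebraMap 𝕜 A).toMonoidHom)

end Algebra

end spectrum

section NormedAlgebra

variable {𝕜 A : Type*} [NontriviallyNormedField 𝕜] [NormedRing A] [NormedAlgebra 𝕜 A]

theorem spectrum.isUnit_one_sub_smul_of_subset_zero {a : A} (ha : spectrum 𝕜 a ⊆ {0}) (z : 𝕜) :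
    IsUnit (1 - z • a) := by
  have hρ : spectralRadius 𝕜 a = 0 :=
    nonpos_iff_eq_zero.mp <| iSup₂_le fun k hk => by simp [Set.mem_singleton_iff.mp (ha hk)]
  exact isUnit_one_sub_smul_of_lt_inv_radius (by simp [hρ])

variable [CompleteSpace A]

theorem spectrum.one_le_norm_sub_mul_norm_resolvent {a : A} {k z : 𝕜} (hk : k ∈ spectrum 𝕜 a)
    (hz : z ∈ resolventSet 𝕜 a) : 1 ≤ ‖k - z‖ * ‖resolvent a z‖ := by
  by_contra! hlt
  rw [← norm_smul] at hlt
  have hfactor : (algebraMap 𝕜 A z - a) * (1 + (k - z) • resolvent a z) =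
      algebraMap 𝕜 A k - a := by
    rw [mul_add, mul_one, mul_smul_comm, resolvent, Ring.mul_inverse_cancel _ hz,
      Algebra.algebraMap_eq_smul_one, Algebra.algebraMap_eq_smul_one, sub_smul]
    abel
  have hunit : IsUnit (1 + (k - z) • resolvent a z) := by
    rw [← sub_neg_eq_add]
    exact (Units.oneSub _ (by rwa [norm_neg])).isUnit
  exact mem_iff.mp hk (hfactor ▸ hz.mul hunit)

theorem hasDerivAt_ringInverse_one_sub_smul (a : A) :
    HasDerivAt (fun z : 𝕜 => Ring.inverse (1 - z • a)) a 0 := by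
  have h : HasDerivAt (fun z : 𝕜 => 1 - z • a) (-a) 0 := by
    simpa using ((hasDerivAt_id (0 : 𝕜)).smul_const a).const_sub (1 : A)
  simpa using! (hasFDerivAt_ringInverse (𝕜 := 𝕜) (1 : Aˣ)).comp_hasDerivAt_of_eq 0 h (by simp)

theorem differentiable_ringInverse_one_sub_smul {a : A} (ha : ∀ z : 𝕜, IsUnit (1 - z • a)) :
    Differentiable 𝕜 fun z : 𝕜 => Ring.inverse (1 - z • a) := fun z =>
  (differentiableAt_inverse (ha z)).comp z ((differentiable_id.smul_const a).const_sub 1 z)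

end NormedAlgebra

section HilbertSpace

variable {H : Type*} [NormedAddCommGroup H] [InnerProductSpace ℂ H]

theorem ContinuousLinearMap.eq_zero_of_hasDerivAt_of_norm_le_one {f : ℂ → H →L[ℂ] H}
    {T : H →L[ℂ] H} {r : ℝ} (hr : 0 < r) (hf : DiffContOnCl ℂ f (ball 0 r)) (hf₀ : f 0 = 1)
    (hT : HasDerivAt f T 0) (hle : ∀ z ∈ sphere (0 : ℂ) r, ‖f z‖ ≤ 1) : T = 0 := by
  refine ContinuousLinearMap.coe_injective <| (inner_map_self_eq_zero _).mp fun x => ?_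
  set L : (H →L[ℂ] H) →L[ℂ] ℂ := (innerSL ℂ x).comp (ContinuousLinearMap.apply ℂ H x)
  have hL : ∀ S, L S = ⟪x, S x⟫_ℂ := fun _ => rfl
  have hF₀ : ‖L (f 0)‖ = ‖x‖ ^ 2 := by simp [hL, hf₀]
  have hFmax : IsMaxOn (norm ∘ L ∘ f) (ball 0 r) 0 := by
    intro z hz
    show ‖L (f z)‖ ≤ ‖L (f 0)‖
    refine hF₀ ▸ Complex.norm_le_of_forall_mem_frontier_norm_le isBounded_ball
      (L.differentiable.comp_diffContOnCl hf) (fun w hw => ?_) (subset_closure hz)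
    rw [frontier_ball 0 hr.ne'] at hw
    calc ‖L (f w)‖ ≤ ‖x‖ * (‖f w‖ * ‖x‖) :=
          (norm_inner_le_norm _ _).trans (by gcongr; exact (f w).le_opNorm x)
      _ ≤ ‖x‖ * (1 * ‖x‖) := by gcongr; exact hle w hw
      _ = ‖x‖ ^ 2 := by ring
  have hFconst : L ∘ f =ᶠ[nhds 0] fun _ => L (f 0) :=
    Filter.mem_of_superset (closedBall_mem_nhds 0 hr)
      (Complex.eqOn_closedBall_of_isMaxOn_norm (L.differentiable.comp_diffContOnCl hf) hFmax)
  have hderiv : L T = 0 := (L.hasFDerivAt.comp_hasDerivAt 0 hT).unique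
    ((hasDerivAt_const 0 _).congr_of_eventuallyEq hFconst)
  rw [hL] at hderiv
  exact inner_eq_zero_symm.mp hderiv

end HilbertSpace

section PseudoSpectrum

variable {H : Type*} [NormedAddCommGroup H] [InnerProductSpace ℂ H] [CompleteSpace H]
  {ε : ℝ} {A : H →L[ℂ] H}

theorem mem_pseudoSpectrum_iff {z : ℂ} :
    z ∈ pseudoSpectrum ε A ↔ z ∈ spectrum ℂ A ∨ ε⁻¹ < ‖resolvent A z‖ := by
  simp [pseudoSpectrum, spectrum.mem_iff, resolvent, Algebra.algebraMap_eq_smul_one]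

theorem pseudoSpectrum_sub_algebraMap (a : ℂ) :
    pseudoSpectrum ε (A - algebraMap ℂ _ a) = (· + a) ⁻¹' pseudoSpectrum ε A := by
  ext z
  simp only [pseudoSpectrum, Set.mem_ofPred_eq, Set.mem_preimage, Algebra.algebraMap_eq_smul_one,
    add_smul, sub_sub_eq_add_sub, add_sub_assoc]

theorem ball_subset_pseudoSpectrum {k : ℂ} (hk : k ∈ spectrum ℂ A) :
    ball k ε ⊆ pseudoSpectrum ε A := by
  intro z hz
  rw [mem_pseudoSpectrum_iff, or_iff_not_imp_left]
  intro hzρ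
  have hε : 0 < ε := pos_of_mem_ball hz
  rw [mem_ball, dist_eq_norm, ← norm_neg, neg_sub] at hz
  have h1 := spectrum.one_le_norm_sub_mul_norm_resolvent hk (spectrum.notMem_iff.mp hzρ)
  have hR : 0 < ‖resolvent A z‖ := pos_of_mul_pos_right (one_pos.trans_le h1) (norm_nonneg _)
  rw [inv_lt_iff_one_lt_mul₀' hε]
  exact h1.trans_lt (mul_lt_mul_of_pos_right hz hR)

theorem pseudoSpectrum_algebraMap [Nontrivial H] (hε : 0 < ε) (a : ℂ) :
    pseudoSpectrum ε (algebraMap ℂ (H →L[ℂ] H) a) = ball a ε := by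
  ext z
  rw [mem_pseudoSpectrum_iff, spectrum.scalar_eq, spectrum.resolvent_algebraMap,
    norm_algebraMap', norm_inv, Set.mem_singleton_iff, mem_ball, dist_eq_norm]
  rcases eq_or_ne z a with rfl | hza
  · simpa using hε
  · rw [inv_lt_inv₀ hε (norm_pos_iff.mpr (sub_ne_zero.mpr hza))]
    simp [hza]

theorem norm_inverse_one_sub_smul_le_one (hε : 0 < ε) (h : pseudoSpectrum ε A ⊆ ball 0 ε)
    {z : ℂ} (hz : ‖z‖ = ε⁻¹) : ‖Ring.inverse (1 - z • A)‖ ≤ 1 := by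
  have hz₀ : z ≠ 0 := norm_ne_zero_iff.mp (hz ▸ (inv_pos.mpr hε).ne')
  have hz' : z⁻¹ ∉ pseudoSpectrum ε A := fun hmem => by
    simpa [norm_inv, hz] using h hmem
  rw [mem_pseudoSpectrum_iff, not_or, not_lt, spectrum.resolvent_inv A hz₀, norm_smul, hz] at hz'
  exact (mul_le_iff_le_one_right (inv_pos.mpr hε)).mp hz'.2

theorem eq_zero_of_pseudoSpectrum_subset_ball (hε : 0 < ε) (h : pseudoSpectrum ε A ⊆ ball 0 ε) :
    A = 0 := by
  have hσ : spectrum ℂ A ⊆ {0} := fun k hk =>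
    eq_of_ball_subset_ball hε ((ball_subset_pseudoSpectrum hk).trans h)
  exact ContinuousLinearMap.eq_zero_of_hasDerivAt_of_norm_le_one (inv_pos.mpr hε)
    (differentiable_ringInverse_one_sub_smul
      (spectrum.isUnit_one_sub_smul_of_subset_zero hσ)).diffContOnCl
    (by simp) (hasDerivAt_ringInverse_one_sub_smul A)
    fun z hz => norm_inverse_one_sub_smul_le_one hε h (by simpa using hz)

end PseudoSpectrum

theorem stmt_10 {H : Type*} [NormedAddCommGroup H] [InnerProductSpace ℂ H]
    [CompleteSpace H] [Nontrivial H] (ε : ℝ) (hε : 0 < ε) (A : H →L[ℂ] H) (a : ℂ) :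
    A = a • (1 : H →L[ℂ] H) ↔ pseudoSpectrum ε A = Metric.ball a ε := by
  rw [← Algebra.algebraMap_eq_smul_one]
  constructor
  · rintro rfl
    exact pseudoSpectrum_algebraMap hε a
  · intro h
    refine sub_eq_zero.mp (eq_zero_of_pseudoSpectrum_subset_ball hε fun z hz => ?_)
    rw [pseudoSpectrum_sub_algebraMap, Set.mem_preimage, h] at hz
    simpa [dist_eq_norm] using hz
end

section
/- Let H be a complex Hilbert space with dim H ≥ 2, and for each x ∈ H let V_x be a unitary operator on H. Suppose that for all x, y ∈ H with ⟨x, y⟩ ≠ 0 and all unit vectors f, g ∈ H: ⟨f, g⟩ = 0 implies ⟨V_x f, V_y g⟩ = 0. Then for all x, y with ⟨x, y⟩ ≠ 0, the operator V_x* V_y is a scalar multiple of the identity. -/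
/-!
Writing `U = (V x)† V y`, the hypothesis (extended from unit vectors by scaling) says
`⟪f, U g⟫ = ⟪V x f, V y g⟫ = 0` whenever `f ⊥ g`, so `U g ∈ (ℂ ∙ g)ᗮᗮ = ℂ ∙ g`. Thus every vector
is an eigenvector of `U`, and a linear map with this property is a homothety.
-/

open scoped InnerProductSpace

section

variable {𝕜 E F : Type*} [RCLike 𝕜] [NormedAddCommGroup E] [InnerProductSpace 𝕜 E]
  [NormedAddCommGroup F] [InnerProductSpace 𝕜 F]

theorem inner_apply_apply_eq_zero_of_forall_norm_eq_one {A B : E →ₗ[𝕜] F}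
    (h : ∀ f g : E, ‖f‖ = 1 → ‖g‖ = 1 → ⟪f, g⟫_𝕜 = 0 → ⟪A f, B g⟫_𝕜 = 0)
    {f g : E} (hfg : ⟪f, g⟫_𝕜 = 0) : ⟪A f, B g⟫_𝕜 = 0 := by
  rcases eq_or_ne f 0 with rfl | hf
  · simp
  rcases eq_or_ne g 0 with rfl | hg
  · simp
  have hunit := h _ _ (norm_smul_inv_norm hf) (norm_smul_inv_norm hg)
    (by rw [inner_smul_left, inner_smul_right, hfg, mul_zero, mul_zero])
  simpa [inner_smul_left, inner_smul_right, hf, hg] using hunit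

theorem mem_span_singleton_of_forall_inner_eq_zero {v w : E}
    (h : ∀ f : E, ⟪f, v⟫_𝕜 = 0 → ⟪f, w⟫_𝕜 = 0) : w ∈ 𝕜 ∙ v := by
  rw [← (𝕜 ∙ v).orthogonal_orthogonal, Submodule.mem_orthogonal]
  intro f hf
  exact h f (Submodule.mem_orthogonal_singleton_iff_inner_left.mp hf)

theorem ContinuousLinearMap.exists_eq_smul_one_of_forall_inner_eq_zero {T : E →L[𝕜] E}
    (h : ∀ f g : E, ⟪f, g⟫_𝕜 = 0 → ⟪f, T g⟫_𝕜 = 0) : ∃ c : 𝕜, T = c • 1 := by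
  have hcollinear (g : E) : ¬LinearIndependent 𝕜 ![g, T g] := by
    obtain ⟨c, hc⟩ := Submodule.mem_span_singleton.mp
      (mem_span_singleton_of_forall_inner_eq_zero (h · g))
    rw [LinearIndependent.pair_iff]
    intro hind
    have := (hind c (-1) (by rw [hc]; simp)).2
    norm_num at this
  obtain ⟨c, hc⟩ := LinearMap.exists_eq_smul_id_of_forall_notLinearIndependent hcollinear
  exact ⟨c, ext fun g => LinearMap.congr_fun hc g⟩

end

theorem stmt_17_general {H : Type*} [NormedAddCommGroup H] [InnerProductSpace ℂ H]
    [CompleteSpace H]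
    (V : H → (H →L[ℂ] H))
    (horth : ∀ x y : H, ⟪x, y⟫_ℂ ≠ 0 → ∀ f g : H, ‖f‖ = 1 → ‖g‖ = 1 →
      ⟪f, g⟫_ℂ = 0 → ⟪V x f, V y g⟫_ℂ = 0) :
    ∀ x y : H, ⟪x, y⟫_ℂ ≠ 0 →
      ∃ c : ℂ, ContinuousLinearMap.adjoint (V x) * V y = c • (1 : H →L[ℂ] H) := by
  intro x y hxy
  apply ContinuousLinearMap.exists_eq_smul_one_of_forall_inner_eq_zero
  intro f g hfg
  rw [mul_apply_eq_comp, ContinuousLinearMap.adjoint_inner_right]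
  exact inner_apply_apply_eq_zero_of_forall_norm_eq_one
    (A := (V x : H →ₗ[ℂ] H)) (B := (V y : H →ₗ[ℂ] H)) (horth x y hxy) hfg

theorem stmt_17 {H : Type*} [NormedAddCommGroup H] [InnerProductSpace ℂ H]
    [CompleteSpace H] (hdim : 2 ≤ Module.rank ℂ H)
    (V : H → (H →L[ℂ] H))
    (hunitary : ∀ x : H, ContinuousLinearMap.adjoint (V x) * V x = 1 ∧
      V x * ContinuousLinearMap.adjoint (V x) = 1)
    (horth : ∀ x y : H, ⟪x, y⟫_ℂ ≠ 0 → ∀ f g : H, ‖f‖ = 1 → ‖g‖ = 1 →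
      ⟪f, g⟫_ℂ = 0 → ⟪V x f, V y g⟫_ℂ = 0) :
    ∀ x y : H, ⟪x, y⟫_ℂ ≠ 0 →
      ∃ c : ℂ, ContinuousLinearMap.adjoint (V x) * V y = c • (1 : H →L[ℂ] H) :=
  stmt_17_general V horth
end
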